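/- The three-dimensional space E₂ = span{1, x, x³} of functions on [−1,2] has no Bernstein basis at all: there is no function p ∈ E₂ that has a zero of order at least 2 at −1 (p(−1) = p′(−1) = 0) and is nonzero at 2, since any p ∈ E₂ with a double zero at −1 is a scalar multiple of (x+1)²(x−2) and hence also vanishes at 2. -/
import Mathlib


open Set Filter Topology

noncomputable section

/-- `p k`, `k = 0, …, n`, is a Bernstein basis of the `(n+1)`-dimensional subspace `U` of
`C^n([a,b], ℝ)`: it is a basis of `U` and each `p k` has a zero of order `k` at `a`
(derivatives of order `< k` vanish at `a`, the `k`-th does not) and a zero of order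
`n - k` at `b`. -/
def IsBernsteinBasisOf (a b : ℝ) (n : ℕ) (U : Submodule ℝ (ℝ → ℝ))
    (p : Fin (n + 1) → ℝ → ℝ) : Prop :=
  (∀ k, p k ∈ U) ∧ LinearIndependent ℝ p ∧ Submodule.span ℝ (Set.range p) = U ∧
  ∀ k : Fin (n + 1),
    (∀ j : ℕ, j < (k : ℕ) → iteratedDeriv j (p k) a = 0) ∧
    iteratedDeriv (k : ℕ) (p k) a ≠ 0 ∧
    (∀ j : ℕ, j < n - (k : ℕ) → iteratedDeriv j (p k) b = 0) ∧
    iteratedDeriv (n - (k : ℕ)) (p k) b ≠ 0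


/-- The space `E₂ = span{1, x, x³}`. -/
def E₂ : Submodule ℝ (ℝ → ℝ) :=
  Submodule.span ℝ {(fun _ => (1 : ℝ)), (fun x => x), (fun x => x ^ 3)}

lemma mem_E₂_iff {g : ℝ → ℝ} (hg : g ∈ E₂) :
    ∃ a b c : ℝ, g = fun x => a + b * x + c * x ^ 3 := by
  rw [E₂, Submodule.mem_span_insert] at hg
  obtain ⟨a, z, hz, rfl⟩ := hg
  rw [Submodule.mem_span_insert] at hz
  obtain ⟨b, w, hw, rfl⟩ := hz
  rw [Submodule.mem_span_singleton] at hw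
  obtain ⟨c, rfl⟩ := hw
  exact ⟨a, b, c, by funext x; simp [mul_comm]; ring⟩

lemma deriv_cubic (a b c x : ℝ) :
    deriv (fun x : ℝ => a + b * x + c * x ^ 3) x = b + c * (3 * x ^ 2) := by
  have h : HasDerivAt (fun x : ℝ => a + b * x + c * x ^ 3)
      (0 + b * 1 + c * (3 * x ^ 2)) x := by
    have h1 : HasDerivAt (fun x : ℝ => x) 1 x := hasDerivAt_id x
    have h3 : HasDerivAt (fun x : ℝ => x ^ 3) (3 * x ^ 2) x := by
      simpa using hasDerivAt_pow 3 x
    exact ((hasDerivAt_const x a).add (h1.const_mul b)).add (h3.const_mul c)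
  simpa using h.deriv

/-- On `[-1,2]`, `E₂ = span{1, x, x³}` has no Bernstein basis at all: every member of `E₂`
with a double zero at `-1` is a scalar multiple of `(x+1)²(x-2)` and hence vanishes at `2`,
so no member of `E₂` has a zero of order at least `2` at `-1` while being nonzero at `2`. -/
theorem e2_no_bernstein_basis_on_neg_one_two :
    (∀ g ∈ E₂, g (-1) = 0 → deriv g (-1) = 0 →
      ∃ c : ℝ, g = fun x => c * ((x + 1) ^ 2 * (x - 2))) ∧
    (¬ ∃ g ∈ E₂, g (-1) = 0 ∧ deriv g (-1) = 0 ∧ g 2 ≠ 0) ∧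
    ¬ ∃ p : Fin 3 → ℝ → ℝ, IsBernsteinBasisOf (-1) 2 2 E₂ p := by
  have main : ∀ g ∈ E₂, g (-1) = 0 → deriv g (-1) = 0 →
      ∃ c : ℝ, g = fun x => c * ((x + 1) ^ 2 * (x - 2)) := by
    intro g hg h0 h1
    obtain ⟨a, b, c, rfl⟩ := mem_E₂_iff hg
    rw [deriv_cubic] at h1
    refine ⟨c, funext fun x => ?_⟩
    simp only at h0 ⊢
    linear_combination h0 + (x + 1) * h1
  have second : ¬ ∃ g ∈ E₂, g (-1) = 0 ∧ deriv g (-1) = 0 ∧ g 2 ≠ 0 := by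
    rintro ⟨g, hg, h0, h1, hne⟩
    obtain ⟨c, rfl⟩ := main g hg h0 h1
    apply hne
    norm_num
  refine ⟨main, second, ?_⟩
  rintro ⟨p, hmem, _, _, hzeros⟩
  obtain ⟨hza, -, -, hzb⟩ := hzeros 2
  apply second
  refine ⟨p 2, hmem 2, ?_, ?_, ?_⟩
  · have := hza 0 (by norm_num)
    simpa [iteratedDeriv_zero] using this
  · have := hza 1 (by norm_num)
    simpa [iteratedDeriv_one] using this
  · simpa [iteratedDeriv_zero] using hzb
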